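/- arXiv:1904.07055 — 2 statements merged into one kernel-verified Lean document; each statement's English description precedes it below -/
import Mathlib

section
/- For every n ≥ 0, N̄(1,3,n) = N̄(2,3,n). -/
/-!
Conjugation of overpartitions is an involution that negates the rank: transpose the Ferrers
diagram, and for every overlined part `p` overline the part `q = #{parts ≥ p}` of the conjugate.
The last row of length `p` and the last column of length `q` meet in the corner cell `(q, p)`,
and transposition swaps their roles, so the same recipe applied to the conjugate sends `q` back
to `p`. Hence ranks `≡ a` and `≡ -a` are equinumerous modulo any `c`, and `2 ≡ -1 [ZMOD 3]`.
-/

open Complex Real MeasureTheory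

/-- An overpartition of `n`: a non-increasing list of positive parts summing to `n`,
together with a choice of part sizes whose first occurrence is overlined. -/
structure Overpartition (n : ℕ) where
  parts : List ℕ
  overlined : Finset ℕ
  pos : ∀ p ∈ parts, 0 < p
  sorted : parts.Pairwise (· ≥ ·)
  parts_sum : parts.sum = n
  overlined_sub : overlined ⊆ parts.toFinset

/-- Dyson's rank of an overpartition: largest part minus number of parts. -/
def Overpartition.rank {n : ℕ} (O : Overpartition n) : ℤ :=
  (O.parts.headI : ℤ) - O.parts.length

/-- `obar n` is the number of overpartitions of `n`. -/
noncomputable def obar (n : ℕ) : ℕ := Nat.card (Overpartition n)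

/-- `Nbar m n` is the number of overpartitions of `n` with rank `m`. -/
noncomputable def Nbar (m : ℤ) (n : ℕ) : ℕ :=
  Nat.card {O : Overpartition n // O.rank = m}

/-- `NbarMod a c n` is the number of overpartitions of `n` with rank ≡ a (mod c). -/
noncomputable def NbarMod (a : ℤ) (c : ℕ) (n : ℕ) : ℕ :=
  Nat.card {O : Overpartition n // O.rank ≡ a [ZMOD (c : ℤ)]}

namespace YoungDiagram

variable (μ : YoungDiagram)

theorem card_transpose : μ.transpose.card = μ.card :=
  Finset.card_map _

theorem sum_rowLens : μ.rowLens.sum = μ.card := by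
  have hrow : ∀ c ∈ μ.cells, c.1 ∈ Finset.range (μ.colLen 0) := fun c hc =>
    Finset.mem_range.2 <| mem_iff_lt_colLen.1 <| μ.up_left_mem le_rfl (Nat.zero_le c.2) hc
  rw [YoungDiagram.card, Finset.card_eq_sum_card_fiberwise hrow, rowLens,
    Finset.sum_eq_multiset_sum, Finset.range_val, Multiset.range, Multiset.map_coe,
    Multiset.sum_coe]
  exact congrArg List.sum (List.map_congr_left fun i _ => μ.rowLen_eq_card)

theorem headI_rowLens : μ.rowLens.headI = μ.rowLen 0 := by
  rcases Nat.eq_zero_or_pos (μ.colLen 0) with h | h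
  · have h0 : ¬0 < μ.rowLen 0 := by
      rw [← mem_iff_lt_rowLen, mem_iff_lt_colLen, h]
      exact lt_irrefl 0
    rw [rowLens, h, List.range_zero, List.map_nil, List.headI_nil]
    exact (Nat.eq_zero_of_not_pos h0).symm
  · obtain ⟨k, hk⟩ := Nat.exists_eq_succ_of_ne_zero h.ne'
    rw [rowLens, hk, List.range_succ_eq_map, List.map_cons, List.headI_cons]

/-- The part of `μ.transpose` matching the part `p` of `μ`: the length of column `p - 1`
(columns are indexed from `0`), i.e. the number of parts of `μ` that are at least `p`. -/
def transposePart (p : ℕ) : ℕ := μ.colLen (p - 1)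

variable {μ}

theorem transposePart_mem_rowLens_transpose {p : ℕ} (hp : p ∈ μ.rowLens) :
    μ.transposePart p ∈ μ.transpose.rowLens := by
  obtain ⟨i, -, rfl⟩ := List.mem_map.1 hp
  have hpos := μ.pos_of_mem_rowLens _ hp
  refine List.mem_map.2 ⟨μ.rowLen i - 1, List.mem_range.2 ?_, μ.rowLen_transpose _⟩
  have := μ.rowLen_anti 0 i (Nat.zero_le i)
  rw [colLen_transpose]
  omega

theorem transposePart_transposePart {p : ℕ} (hp : p ∈ μ.rowLens) :
    μ.transpose.transposePart (μ.transposePart p) = p := by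
  obtain ⟨i, -, rfl⟩ := List.mem_map.1 hp
  have hpos := μ.pos_of_mem_rowLens _ hp
  have hi : i < μ.transposePart (μ.rowLen i) :=
    mem_iff_lt_colLen.1 (mem_iff_lt_rowLen.2 (by omega))
  have hlast : (μ.transposePart (μ.rowLen i) - 1, μ.rowLen i - 1) ∈ μ :=
    mem_iff_lt_colLen.2 (by unfold transposePart at hi ⊢; omega)
  have hle := μ.rowLen_anti i (μ.transposePart (μ.rowLen i) - 1) (by omega)
  rw [mem_iff_lt_rowLen] at hlast
  rw [transposePart, colLen_transpose]
  omega

end YoungDiagram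

attribute [ext] Overpartition

namespace Overpartition

open YoungDiagram

variable {n : ℕ} (O : Overpartition n)

def diagram : YoungDiagram := ofRowLens O.parts O.sorted.sortedGE

theorem rowLens_diagram : O.diagram.rowLens = O.parts :=
  rowLens_ofRowLens_eq_self O.pos

theorem mem_rowLens_diagram_of_mem_overlined {p : ℕ} (hp : p ∈ O.overlined) :
    p ∈ O.diagram.rowLens := by
  rw [rowLens_diagram]
  exact List.mem_toFinset.1 (O.overlined_sub hp)

theorem rank_eq_rowLen_sub_colLen :
    O.rank = (O.diagram.rowLen 0 : ℤ) - O.diagram.colLen 0 := by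
  rw [rank, ← rowLens_diagram, headI_rowLens, length_rowLens]

def conj : Overpartition n where
  parts := O.diagram.transpose.rowLens
  overlined := O.overlined.image O.diagram.transposePart
  pos := O.diagram.transpose.pos_of_mem_rowLens
  sorted := O.diagram.transpose.rowLens_sorted.pairwise
  parts_sum := by
    rw [sum_rowLens, card_transpose, ← sum_rowLens, rowLens_diagram, O.parts_sum]
  overlined_sub := by
    intro q hq
    obtain ⟨p, hp, rfl⟩ := Finset.mem_image.1 hq
    exact List.mem_toFinset.2 <|
      transposePart_mem_rowLens_transpose (O.mem_rowLens_diagram_of_mem_overlined hp)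

theorem diagram_conj : O.conj.diagram = O.diagram.transpose :=
  ofRowLens_to_rowLens_eq_self

theorem conj_conj : O.conj.conj = O := by
  ext1
  · change O.conj.diagram.transpose.rowLens = O.parts
    rw [diagram_conj, transpose_transpose, rowLens_diagram]
  · change (O.overlined.image O.diagram.transposePart).image O.conj.diagram.transposePart = _
    rw [Finset.image_image, diagram_conj]
    exact (Finset.image_congr fun p hp =>
      transposePart_transposePart (O.mem_rowLens_diagram_of_mem_overlined hp)).trans
      Finset.image_id

theorem rank_conj : O.conj.rank = -O.rank := by
  rw [rank_eq_rowLen_sub_colLen, rank_eq_rowLen_sub_colLen, diagram_conj, rowLen_transpose,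
    colLen_transpose]
  ring

end Overpartition

theorem NbarMod_neg (a : ℤ) (c n : ℕ) : NbarMod (-a) c n = NbarMod a c n := by
  refine Nat.card_congr <|
    Equiv.subtypeEquiv (Function.Involutive.toPerm _ Overpartition.conj_conj) fun O => ?_
  change _ ↔ O.conj.rank ≡ a [ZMOD c]
  rw [Overpartition.rank_conj, ← Int.neg_modEq_neg, neg_neg]

theorem NbarMod_congr {a b : ℤ} {c : ℕ} (h : a ≡ b [ZMOD c]) (n : ℕ) :
    NbarMod a c n = NbarMod b c n :=
  Nat.card_congr <| Equiv.subtypeEquivRight fun _ => ⟨(·.trans h), (·.trans h.symm)⟩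

theorem NbarMod_one_three (n : ℕ) : NbarMod 1 3 n = NbarMod 2 3 n := by
  rw [← NbarMod_neg, NbarMod_congr (b := 2) (by decide)]
end

section
/- With the notation above, if c₁ = c (i.e., gcd(c,k) = 1) and c ≥ 3, then for all integers r ≥ 0, δ_{c,k,r} ≤ 1/16 − (c−2)/(2c²), and in particular δ_{c,k,r} < 1/16. -/
open Complex Real MeasureTheory

/-- The quantity δ_{c,k,r}, as a function of ℓ, c₁ and r. -/
def deltaQ (ℓ c₁ r : ℕ) : ℚ :=
  if ℓ = 0 then 0
  else if (ℓ : ℚ) / c₁ ≤ 1 / 4 then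
    1 / 16 - ℓ / (2 * c₁) + ℓ ^ 2 / c₁ ^ 2 - r * ℓ / c₁
  else if (ℓ : ℚ) / c₁ ≤ 3 / 4 then 0
  else 1 / 16 - 3 * ℓ / (2 * c₁) + ℓ ^ 2 / c₁ ^ 2 + 1 / 2 - r * (1 - ℓ / c₁)

/-! Completing the square, the two outer branches of `deltaQ` are `(c - 4j)² / (16c²) - r j / c`
with `j = ℓ` resp. `j = c - ℓ`, and `1 ≤ j ≤ c / 4` in both cases. Such a value is largest at
`j = 1, r = 0`, which gives `(c - 4)² / (16c²) = 1/16 - (c - 2) / (2c²)`; this is below `1/16`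
exactly when `c > 2`. -/

section

variable {K : Type*} [Field K] [LinearOrder K] [IsStrictOrderedRing K]

theorem sq_sub_four_mul_div_sub_le {c j r : K} (hc : 0 < c) (hj : 1 ≤ j) (hjc : 4 * j ≤ c)
    (hr : 0 ≤ r) :
    (c - 4 * j) ^ 2 / (16 * c ^ 2) - r * j / c ≤ (c - 4) ^ 2 / (16 * c ^ 2) := by
  have hsq : (c - 4 * j) ^ 2 ≤ (c - 4) ^ 2 :=
    pow_le_pow_left₀ (by linarith) (by linarith) 2
  have hrj : 0 ≤ r * j / c := by positivity
  linarith [div_le_div_of_nonneg_right hsq (by positivity : (0 : K) ≤ 16 * c ^ 2)]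

theorem one_div_sixteen_sub_eq {c : K} (hc : c ≠ 0) :
    1 / 16 - (c - 2) / (2 * c ^ 2) = (c - 4) ^ 2 / (16 * c ^ 2) := by
  field_simp
  ring

theorem sq_sub_four_div_lt_one_div_sixteen {c : K} (hc : 2 < c) :
    (c - 4) ^ 2 / (16 * c ^ 2) < 1 / 16 := by
  rw [div_lt_div_iff₀ (by positivity) (by norm_num)]
  nlinarith

end

theorem deltaQ_le {ℓ c : ℕ} (r : ℕ) (hℓ : ℓ < c) :
    deltaQ ℓ c r ≤ ((c : ℚ) - 4) ^ 2 / (16 * (c : ℚ) ^ 2) := by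
  have hc : (0 : ℚ) < c := by exact_mod_cast hℓ.trans_le' (Nat.zero_le ℓ)
  have hℓc : (ℓ : ℚ) + 1 ≤ c := by exact_mod_cast hℓ
  unfold deltaQ
  split_ifs with h0 hlow hmid
  · positivity
  · have hℓ1 : (1 : ℚ) ≤ ℓ := by exact_mod_cast Nat.one_le_iff_ne_zero.mpr h0
    rw [div_le_iff₀ hc] at hlow
    rw [show (1 : ℚ) / 16 - ℓ / (2 * c) + ℓ ^ 2 / c ^ 2 - r * ℓ / c
        = (c - 4 * ℓ) ^ 2 / (16 * c ^ 2) - r * ℓ / c by field_simp; ring]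
    exact sq_sub_four_mul_div_sub_le hc hℓ1 (by linarith) (Nat.cast_nonneg r)
  · positivity
  · rw [div_le_iff₀ hc, not_le] at hmid
    rw [show (1 : ℚ) / 16 - 3 * ℓ / (2 * c) + ℓ ^ 2 / c ^ 2 + 1 / 2 - r * (1 - ℓ / c)
        = (c - 4 * (c - ℓ)) ^ 2 / (16 * c ^ 2) - r * (c - ℓ) / c by field_simp; ring]
    exact sq_sub_four_mul_div_sub_le hc (by linarith) (by linarith) (Nat.cast_nonneg r)

theorem deltaQ_lt_general (c r : ℕ) (hc : 3 ≤ c)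
    (ℓ : ℕ) (hℓ : ℓ < c) :
    deltaQ ℓ c r ≤ 1 / 16 - ((c : ℚ) - 2) / (2 * (c : ℚ) ^ 2) ∧
      deltaQ ℓ c r < 1 / 16 := by
  have hc2 : (2 : ℚ) < c := by exact_mod_cast hc
  rw [one_div_sixteen_sub_eq (by positivity)]
  have hle := deltaQ_le r hℓ
  exact ⟨hle, hle.trans_lt (sq_sub_four_div_lt_one_div_sixteen hc2)⟩

theorem deltaQ_lt (a c k r : ℕ) (ha : 0 < a) (hac : a < c) (hcop : Nat.Coprime a c)
    (hk : 0 < k) (hck : ¬ (c ∣ k)) (hgcd : Nat.gcd c k = 1) (hc : 3 ≤ c)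
    (ℓ : ℕ) (hℓ : ℓ < c) (hcong : ℓ ≡ a * k [MOD c]) :
    deltaQ ℓ c r ≤ 1 / 16 - ((c : ℚ) - 2) / (2 * (c : ℚ) ^ 2) ∧
      deltaQ ℓ c r < 1 / 16 :=
  deltaQ_lt_general c r hc ℓ hℓ
end
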